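/- Let T > 0 and let u : ℝ × [0,T) → ℝ be a classical periodic solution of the Fornberg–Whitham equation with initial value u₀(x) = u(x,0). Then for every t ∈ [0,T), ∫_0^1 u(x,t)² dx ≤ e^{2t} ∫_0^1 u₀(x)² dx. -/

import Mathlib

/-!
The L² norm is in fact conserved, and `exp (2 t) ≥ 1`. Multiplying the equation by `u` and
integrating over a period, the transport term `(3/2) u² uₓ` is the derivative of the periodic
function `u³ / 2`, and the nonlocal term vanishes because the kernel is symmetric,
`K (1 - y) = K y`, which makes `f ↦ K * f'` skew-adjoint on periodic functions. Hence
`∫ u u_t dx = 0`, and integrating `∂ₜ (u²) = 2 u u_t` in time (Fubini) gives conservation.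
-/

open MeasureTheory

/-- The 1-periodic convolution kernel of `(id - ∂ₓ²)⁻¹` on the circle, on `[0,1)`. -/
noncomputable def FWKernel (y : ℝ) : ℝ :=
  (Real.exp y + Real.exp (1 - y)) / (2 * (Real.exp 1 - 1))

/-- A classical periodic solution of the Fornberg–Whitham equation on `ℝ × [0,T)`:
`u` is 1-periodic in `x`, has continuous partial derivatives `ux = ∂ₓ u` and
`ut = ∂ₜ u` on `ℝ × [0,T)`, and satisfies
`∂ₜ u + (3/2) u ∂ₓ u = ∫_0^1 K(y) ∂ₓ u(x - y, t) dy`. -/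
def IsClassicalFWSolution (T : ℝ) (u ux ut : ℝ → ℝ → ℝ) : Prop :=
  ContinuousOn (fun p : ℝ × ℝ => u p.1 p.2) (Set.univ ×ˢ Set.Ico 0 T) ∧
  (∀ x : ℝ, ∀ t ∈ Set.Ico (0 : ℝ) T, u (x + 1) t = u x t) ∧
  (∀ x : ℝ, ∀ t ∈ Set.Ico (0 : ℝ) T, HasDerivAt (fun x' => u x' t) (ux x t) x) ∧
  (∀ x : ℝ, ∀ t ∈ Set.Ico (0 : ℝ) T,
    HasDerivWithinAt (fun t' => u x t') (ut x t) (Set.Ico 0 T) t) ∧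
  ContinuousOn (fun p : ℝ × ℝ => ux p.1 p.2) (Set.univ ×ˢ Set.Ico 0 T) ∧
  ContinuousOn (fun p : ℝ × ℝ => ut p.1 p.2) (Set.univ ×ˢ Set.Ico 0 T) ∧
  (∀ x : ℝ, ∀ t ∈ Set.Ico (0 : ℝ) T,
    ut x t + (3 / 2) * u x t * ux x t = ∫ y in (0:ℝ)..1, FWKernel y * ux (x - y) t)

open Set

lemma intervalIntegral_swap_of_continuousOn {F : ℝ → ℝ → ℝ} {a b c d : ℝ}
    (hF : ContinuousOn (fun p : ℝ × ℝ => F p.1 p.2) (uIcc a b ×ˢ uIcc c d)) :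
    ∫ x in a..b, ∫ y in c..d, F x y = ∫ y in c..d, ∫ x in a..b, F x y :=
  intervalIntegral_intervalIntegral_swap <|
    (hF.integrableOn_compact (isCompact_uIcc.prod isCompact_uIcc)).mono_set
      (prod_mono uIoc_subset_uIcc uIoc_subset_uIcc)

lemma Function.Periodic.periodic_of_hasDerivAt {f f' : ℝ → ℝ} {c : ℝ}
    (hf : Function.Periodic f c) (hf' : ∀ x, HasDerivAt f (f' x) x) :
    Function.Periodic f' c := fun x => by
  have h := (hf' (x + c)).comp_add_const x c
  rw [show (fun y => f (y + c)) = f from funext hf] at h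
  exact h.unique (hf' x)

lemma Function.Periodic.integral_deriv_eq_zero {F F' : ℝ → ℝ} {c : ℝ}
    (hF : Function.Periodic F c) (hF' : ∀ x, HasDerivAt F (F' x) x) (a : ℝ)
    (hint : IntervalIntegrable F' volume a (a + c)) : ∫ x in a..a + c, F' x = 0 := by
  rw [intervalIntegral.integral_eq_sub_of_hasDerivAt (fun x _ => hF' x) hint, hF a, sub_self]

lemma Function.Periodic.integral_comp_add_right {g : ℝ → ℝ} {c : ℝ}
    (hg : Function.Periodic g c) (y : ℝ) : ∫ x in 0..c, g (x + y) = ∫ x in 0..c, g x := by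
  simpa [add_comm c y] using hg.intervalIntegral_add_eq y 0

lemma Function.Periodic.integral_mul_deriv_comp_add_eq_neg {f f' : ℝ → ℝ} {c : ℝ}
    (hf : Function.Periodic f c) (hf' : ∀ x, HasDerivAt f (f' x) x) (hf'c : Continuous f')
    (y : ℝ) : ∫ x in 0..c, f x * f' (x + y) = -∫ x in 0..c, f x * f' (x - y) := by
  have hfc : Continuous f := continuous_iff_continuousAt.2 fun x => (hf' x).continuousAt
  have hshift : ∀ x, HasDerivAt (fun z => f (z - y)) (f' (x - y)) x := fun x =>
    (hf' (x - y)).comp_sub_const x y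
  have hi₁ : Continuous fun x => f' x * f (x - y) := by fun_prop
  have hi₂ : Continuous fun x => f x * f' (x - y) := by fun_prop
  have hG : Function.Periodic (fun x => f x * f (x - y)) c := hf.mul (hf.sub_const y)
  have hparts := hG.integral_deriv_eq_zero (fun x => (hf' x).mul (hshift x)) 0
    ((hi₁.add hi₂).intervalIntegrable _ _)
  rw [zero_add, intervalIntegral.integral_add (hi₁.intervalIntegrable _ _)
    (hi₂.intervalIntegrable _ _)] at hparts
  have hcross : Function.Periodic (fun x => f' x * f (x - y)) c :=
    (hf.periodic_of_hasDerivAt hf').mul (hf.sub_const y)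
  have htranslate := hcross.integral_comp_add_right y
  simp only [add_sub_cancel_right] at htranslate
  simp_rw [mul_comm (f _) (f' (_ + y))]
  linarith

/-- After Fubini this is `∫ K y * I y`, where `I y = ∫ f x * f' (x - y)` is odd and `c`-periodic
(`integral_mul_deriv_comp_add_eq_neg`), and `K` is even about `c / 2`. -/
lemma Function.Periodic.integral_mul_integral_kernel_deriv_eq_zero {f f' K : ℝ → ℝ} {c : ℝ}
    (hf : Function.Periodic f c) (hf' : ∀ x, HasDerivAt f (f' x) x) (hf'c : Continuous f')
    (hK : Continuous K) (hK_symm : ∀ y, K (c - y) = K y) :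
    ∫ x in 0..c, f x * ∫ y in 0..c, K y * f' (x - y) = 0 := by
  have hfc : Continuous f := continuous_iff_continuousAt.2 fun x => (hf' x).continuousAt
  set I : ℝ → ℝ := fun y => ∫ x in 0..c, f x * f' (x - y)
  have hswap :
      ∫ x in 0..c, f x * ∫ y in 0..c, K y * f' (x - y) = ∫ y in 0..c, K y * I y := by
    simp_rw [← intervalIntegral.integral_const_mul]
    rw [intervalIntegral_swap_of_continuousOn (Continuous.continuousOn (by fun_prop))]
    refine intervalIntegral.integral_congr fun y _ => ?_
    simp only [I, ← intervalIntegral.integral_const_mul]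
    exact intervalIntegral.integral_congr fun x _ => by ring
  have hreflect : ∀ y, K (c - y) * I (c - y) = -(K y * I y) := fun y => by
    have hshift : ∀ x, f' (x - (c - y)) = f' (x + y) := fun x => by
      rw [show x - (c - y) = x + y - c by ring, (hf.periodic_of_hasDerivAt hf').sub_eq]
    simp only [I, hK_symm, hshift, hf.integral_mul_deriv_comp_add_eq_neg hf' hf'c, mul_neg]
  have hflip := intervalIntegral.integral_comp_sub_left (fun y => K y * I y) c (a := 0) (b := c)
  simp only [hreflect, intervalIntegral.integral_neg, sub_self, sub_zero] at hflip
  linarith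

lemma integral_sub_integral_eq_integral_integral_of_hasDerivAt {v vt : ℝ → ℝ → ℝ}
    {a b t₀ t₁ : ℝ} (ht : t₀ ≤ t₁)
    (hv : ContinuousOn (fun p : ℝ × ℝ => v p.1 p.2) (uIcc a b ×ˢ Icc t₀ t₁))
    (hvt : ContinuousOn (fun p : ℝ × ℝ => vt p.1 p.2) (uIcc a b ×ˢ Icc t₀ t₁))
    (hderiv : ∀ x ∈ uIcc a b, ∀ s ∈ Ioo t₀ t₁, HasDerivAt (v x) (vt x s) s) :
    (∫ x in a..b, v x t₁) - ∫ x in a..b, v x t₀ =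
      ∫ s in t₀..t₁, ∫ x in a..b, vt x s := by
  have hslice : ∀ s ∈ Icc t₀ t₁, IntervalIntegrable (fun x => v x s) volume a b :=
    fun s hs => (hv.comp (by fun_prop) fun x hx => mk_mem_prod hx hs).intervalIntegrable
  have hftc :
      EqOn (fun x => v x t₁ - v x t₀) (fun x => ∫ s in t₀..t₁, vt x s) (uIcc a b) :=
    fun x hx => (intervalIntegral.integral_eq_sub_of_hasDerivAt_of_le ht
      (hv.comp (by fun_prop) fun s hs => mk_mem_prod hx hs) (hderiv x hx)
      (ContinuousOn.intervalIntegrable (uIcc_of_le ht ▸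
        hvt.comp (by fun_prop) fun s hs => mk_mem_prod hx hs))).symm
  rw [← intervalIntegral.integral_sub (hslice _ (right_mem_Icc.2 ht))
    (hslice _ (left_mem_Icc.2 ht)), intervalIntegral.integral_congr hftc]
  exact intervalIntegral_swap_of_continuousOn (uIcc_of_le ht ▸ hvt)

lemma continuous_slice_of_continuousOn_univ_prod {F : ℝ → ℝ → ℝ} {S : Set ℝ}
    (hF : ContinuousOn (fun p : ℝ × ℝ => F p.1 p.2) (univ ×ˢ S)) {t : ℝ} (ht : t ∈ S) :
    Continuous fun x => F x t :=
  hF.comp_continuous (by fun_prop) fun x => mk_mem_prod (mem_univ x) ht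

lemma FWKernel_one_sub (y : ℝ) : FWKernel (1 - y) = FWKernel y := by
  unfold FWKernel
  ring_nf

lemma continuous_FWKernel : Continuous FWKernel := by
  unfold FWKernel
  fun_prop

namespace IsClassicalFWSolution

variable {T : ℝ} {u ux ut : ℝ → ℝ → ℝ}

lemma integral_mul_timeDeriv_eq_zero (hu : IsClassicalFWSolution T u ux ut) {s : ℝ}
    (hs : s ∈ Ico 0 T) : ∫ x in 0..1, u x s * ut x s = 0 := by
  obtain ⟨hcont, hper, hdx, -, hcux, hcut, hpde⟩ := hu
  have hus := continuous_slice_of_continuousOn_univ_prod hcont hs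
  have huxs := continuous_slice_of_continuousOn_univ_prod hcux hs
  have huts := continuous_slice_of_continuousOn_univ_prod hcut hs
  have hper_s : Function.Periodic (fun x => u x s) 1 := fun x => hper x s hs
  have hdispersion : ∫ x in 0..1, u x s * ∫ y in 0..1, FWKernel y * ux (x - y) s = 0 :=
    hper_s.integral_mul_integral_kernel_deriv_eq_zero (fun x => hdx x s hs) huxs
      continuous_FWKernel FWKernel_one_sub
  have htransport : ∫ x in 0..1, 3 / 2 * u x s ^ 2 * ux x s = 0 := by
    have hcube : Function.Periodic (fun x => u x s ^ 3 / 2) 1 :=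
      hper_s.comp fun z => z ^ 3 / 2
    simpa using hcube.integral_deriv_eq_zero
      (fun x => (((hdx x s hs).pow 3).div_const 2).congr_deriv (by push_cast; ring)) 0
      (Continuous.intervalIntegrable (by fun_prop) _ _)
  calc ∫ x in 0..1, u x s * ut x s
      = (∫ x in 0..1, u x s * ut x s) + ∫ x in 0..1, 3 / 2 * u x s ^ 2 * ux x s := by
        rw [htransport, add_zero]
    _ = ∫ x in 0..1, (u x s * ut x s + 3 / 2 * u x s ^ 2 * ux x s) :=
        (intervalIntegral.integral_add (Continuous.intervalIntegrable (by fun_prop) _ _)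
          (Continuous.intervalIntegrable (by fun_prop) _ _)).symm
    _ = ∫ x in 0..1, u x s * ∫ y in 0..1, FWKernel y * ux (x - y) s :=
        intervalIntegral.integral_congr fun x _ => by rw [← hpde x s hs]; ring
    _ = 0 := hdispersion

lemma integral_sq_eq (hu : IsClassicalFWSolution T u ux ut) {t : ℝ} (ht : t ∈ Ico 0 T) :
    ∫ x in 0..1, u x t ^ 2 = ∫ x in 0..1, u x 0 ^ 2 := by
  have hsub : Icc 0 t ⊆ Ico 0 T := Icc_subset_Ico_right ht.2
  have hbox : uIcc (0 : ℝ) 1 ×ˢ Icc 0 t ⊆ univ ×ˢ Ico 0 T := prod_mono (subset_univ _) hsub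
  have ⟨hcont, _, _, hdt, _, hcut, _⟩ := hu
  have hderiv : ∀ x, ∀ s ∈ Ioo 0 t, HasDerivAt (fun s => u x s ^ 2) (2 * u x s * ut x s) s :=
    fun x s hs => (((hdt x s (hsub (Ioo_subset_Icc_self hs))).hasDerivAt
      (Ico_mem_nhds hs.1 (hs.2.trans ht.2))).pow 2).congr_deriv (by push_cast; ring)
  have hv : ContinuousOn (fun p : ℝ × ℝ => u p.1 p.2 ^ 2) (uIcc 0 1 ×ˢ Icc 0 t) :=
    (hcont.mono hbox).pow 2
  have hvt :
      ContinuousOn (fun p : ℝ × ℝ => 2 * u p.1 p.2 * ut p.1 p.2) (uIcc 0 1 ×ˢ Icc 0 t) :=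
    (continuousOn_const.mul (hcont.mono hbox)).mul (hcut.mono hbox)
  have henergy := integral_sub_integral_eq_integral_integral_of_hasDerivAt
    (v := fun x s => u x s ^ 2) (vt := fun x s => 2 * u x s * ut x s) ht.1 hv hvt
    fun x _ => hderiv x
  rw [← sub_eq_zero, henergy]
  refine (intervalIntegral.integral_congr fun s hs => ?_).trans intervalIntegral.integral_zero
  simp only [mul_assoc, intervalIntegral.integral_const_mul]
  rw [hu.integral_mul_timeDeriv_eq_zero (hsub (uIcc_of_le ht.1 ▸ hs)), mul_zero]

end IsClassicalFWSolution

theorem fw_L2_bound (T : ℝ) (u ux ut : ℝ → ℝ → ℝ)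
    (hu : IsClassicalFWSolution T u ux ut) :
    ∀ t ∈ Set.Ico (0 : ℝ) T,
      (∫ x in (0:ℝ)..1, (u x t) ^ 2) ≤ Real.exp (2 * t) * ∫ x in (0:ℝ)..1, (u x 0) ^ 2 := by
  intro t ht
  rw [hu.integral_sq_eq ht]
  exact le_mul_of_one_le_left (intervalIntegral.integral_nonneg zero_le_one fun x _ => sq_nonneg _)
    (Real.one_le_exp (by linarith [ht.1]))
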